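/- A point (R, Y, Z, W) ∈ ℝ⁴ is an equilibrium point of the NDBWMCM vector field (i.e., all four component functions vanish) if and only if W = 0 and Z = −(α/α_c)^{1/p} Y. Hence the equilibrium set equals ℰ = {(R, Y, −(α/α_c)^{1/p}Y, 0) : R, Y ∈ ℝ}. -/

import Mathlib

private lemma g_abs (p : ℝ) (hp : p = 1 ∨ 2 ≤ p) (x : ℝ) :
    |(|x| ^ (p - 1) * x)| = |x| ^ p := by
  have hp0 : 0 < p := by rcases hp with rfl | hp <;> linarith
  rcases eq_or_ne x 0 with rfl | hx
  · rcases hp with rfl | hp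
    · simp
    · simp [Real.zero_rpow (by linarith : p - 1 ≠ 0), Real.zero_rpow hp0.ne']
  · rw [abs_mul, abs_of_nonneg (Real.rpow_nonneg (abs_nonneg x) _),
      ← Real.rpow_add_one (abs_ne_zero.mpr hx), sub_add_cancel]

private lemma g_inj (p : ℝ) (hp : p = 1 ∨ 2 ≤ p) :
    Function.Injective (fun x : ℝ => |x| ^ (p - 1) * x) := by
  have hp0 : 0 < p := by rcases hp with rfl | hp <;> linarith
  intro a b h
  simp only at h
  have h1 : |a| ^ p = |b| ^ p := by rw [← g_abs p hp a, ← g_abs p hp b, h]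
  have habs : |a| = |b| := by
    have h2 : (|a| ^ p) ^ p⁻¹ = (|b| ^ p) ^ p⁻¹ := by rw [h1]
    rwa [← Real.rpow_mul (abs_nonneg a), ← Real.rpow_mul (abs_nonneg b),
      mul_inv_cancel₀ hp0.ne', Real.rpow_one, Real.rpow_one] at h2
  rcases eq_or_ne a 0 with rfl | ha
  · have : |b| = 0 := by simpa using habs.symm
    simpa using this.symm ▸ (abs_eq_zero.mp this).symm
  · have hpos : (0:ℝ) < |a| ^ (p - 1) := Real.rpow_pos_of_pos (abs_pos.mpr ha) _
    rw [habs] at h hpos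
    exact mul_left_cancel₀ hpos.ne' h

private lemma g_scale (p c : ℝ) (hc : 0 < c) (y : ℝ) :
    |(-(c * y))| ^ (p - 1) * (-(c * y)) = -(c ^ p * (|y| ^ (p - 1) * y)) := by
  have hcp : c ^ (p - 1) * c = c ^ p := by
    rw [← Real.rpow_add_one hc.ne', sub_add_cancel]
  rw [abs_neg, abs_mul, abs_of_pos hc, Real.mul_rpow hc.le (abs_nonneg y), ← hcp]
  ring

/-- Equilibrium points of the NDBWMCM: `(R,Y,Z,W)` is an equilibrium of the vector
field (all four components vanish) iff `W = 0` and `Z = −(α/α_c)^{1/p} Y`. -/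
theorem stmt_16 (π₁ π₂ π₃ n p A α : ℝ)
    (hπ₁ : 0 < π₁) (hπ₂ : 0 < π₂) (hπ₃₁ : -π₂ < π₃) (hπ₃₂ : π₃ < π₂)
    (hn : 1 ≤ n) (hp : p = 1 ∨ 2 ≤ p) (hA : 0 < A) (hα₀ : 0 < α) (hα₁ : α < 1)
    (f₁ f₂ f₃ f₄ : ℝ × ℝ × ℝ × ℝ → ℝ)
    (hf₁ : ∀ q : ℝ × ℝ × ℝ × ℝ, f₁ q =
      α * π₁ * |q.2.1| ^ (p - 1) * q.2.1 + (1 - α) * π₁ * |q.2.2.1| ^ (p - 1) * q.2.2.1)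
    (hf₂ : ∀ q : ℝ × ℝ × ℝ × ℝ, f₂ q = q.2.2.2)
    (hf₃ : ∀ q : ℝ × ℝ × ℝ × ℝ, f₃ q =
      A * (q.2.2.2 - π₂ * |q.2.2.1| ^ (n - 1) * q.2.2.1 * |q.2.2.2|
        - π₃ * |q.2.2.1| ^ n * q.2.2.2))
    (hf₄ : ∀ q : ℝ × ℝ × ℝ × ℝ, f₄ q =
      -(1 / π₁) * f₁ q - α * p * π₁ * |q.2.1| ^ (p - 1) * f₂ q
        - (1 - α) * p * π₁ * |q.2.2.1| ^ (p - 1) * f₃ q) :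
    ∀ R Y Z W : ℝ,
      (f₁ (R, Y, Z, W) = 0 ∧ f₂ (R, Y, Z, W) = 0 ∧ f₃ (R, Y, Z, W) = 0 ∧
        f₄ (R, Y, Z, W) = 0) ↔
      (W = 0 ∧ Z = -(α / (1 - α)) ^ ((1 : ℝ) / p) * Y) := by
  have hp0 : 0 < p := by rcases hp with rfl | hp <;> linarith
  have hαc : 0 < 1 - α := by linarith
  have hx0 : 0 < α / (1 - α) := div_pos hα₀ hαc
  set c : ℝ := (α / (1 - α)) ^ ((1 : ℝ) / p) with hcdef
  have hcpos : 0 < c := Real.rpow_pos_of_pos hx0 _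
  have hcp : c ^ p = α / (1 - α) := by
    rw [hcdef, ← Real.rpow_mul hx0.le, one_div_mul_cancel hp0.ne', Real.rpow_one]
  intro R Y Z W
  constructor
  · rintro ⟨h1, h2, _h3, _h4⟩
    rw [hf₂] at h2
    simp only at h2
    refine ⟨h2, ?_⟩
    rw [hf₁] at h1
    simp only at h1
    have h1' : α * (|Y| ^ (p - 1) * Y) + (1 - α) * (|Z| ^ (p - 1) * Z) = 0 := by
      have hz : π₁ * (α * (|Y| ^ (p - 1) * Y) + (1 - α) * (|Z| ^ (p - 1) * Z)) = 0 := by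
        linear_combination h1
      exact (mul_eq_zero.mp hz).resolve_left hπ₁.ne'
    apply g_inj p hp
    simp only
    rw [neg_mul, g_scale p c hcpos Y, hcp]
    field_simp
    linarith [h1']
  · rintro ⟨hW, hZ⟩
    subst hW hZ
    have hs : (1 - α) * (|(-(c * Y))| ^ (p - 1) * (-(c * Y))) = -(α * (|Y| ^ (p - 1) * Y)) := by
      rw [g_scale p c hcpos Y, hcp]
      field_simp
    have h1 : f₁ (R, Y, -c * Y, 0) = 0 := by
      rw [hf₁]
      simp only
      rw [neg_mul]
      linear_combination π₁ * hs
    have h2 : f₂ (R, Y, -c * Y, 0) = 0 := by rw [hf₂]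
    have h3 : f₃ (R, Y, -c * Y, 0) = 0 := by rw [hf₃]; simp
    refine ⟨h1, h2, h3, ?_⟩
    rw [hf₄, h1, h2, h3]
    ring
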